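/- For every λletrec-term L, the sequent ()L is derivable in the unguarded proof system ug-Reg⁺_letrec (the variant of Reg⁺_letrec whose FIX_letrec rule lacks the guardedness side-condition). Moreover, the derivation can be constructed deterministically bottom-up following the term structure of L. -/

import Mathlib

/-- Node labels of (nameless, de Bruijn) infinite λ-terms. -/
inductive Lab : Type
  | lam : Lab
  | app : Lab
  | var : ℕ → Lab
deriving DecidableEq

/-- Which child positions a node with a given label may have. -/
def okChild : Lab → Bool → Prop
  | .lam, false => True
  | .app, _ => True
  | _, _ => False

/-- Infinite λ-terms (in nameless de Bruijn style), represented as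
labelled possibly-infinite binary trees given by their labelling function. -/
structure Tm : Type where
  lab : List Bool → Option Lab
  root : (lab []).isSome
  cons : ∀ p b, (lab (p ++ [b])).isSome ↔ ∃ l, lab p = some l ∧ okChild l b

namespace Tm

/-- Subterm at a position. -/
def sub (t : Tm) (p : List Bool) (h : (t.lab p).isSome) : Tm where
  lab q := t.lab (p ++ q)
  root := by simpa using h
  cons q b := by
    have h' := t.cons (p ++ q) b
    simpa [List.append_assoc] using h'

/-- Auxiliary: number of λ-labels strictly above, accumulating the prefix. -/
def ldepthAux (t : Tm) : List Bool → List Bool → ℕ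
  | _, [] => 0
  | pre, b :: p => (if t.lab pre = some .lam then 1 else 0) + t.ldepthAux (pre ++ [b]) p

/-- The number of λ-nodes strictly above position `p` in `t`. -/
def ldepth (t : Tm) (p : List Bool) : ℕ := t.ldepthAux [] p

end Tm

def shiftLab (σ : ℕ → ℕ) : Lab → Lab
  | .var k => .var (σ k)
  | l => l

theorem okChild_shiftLab (σ : ℕ → ℕ) (l : Lab) (b : Bool) :
    okChild (shiftLab σ l) b ↔ okChild l b := by
  cases l <;> cases b <;> simp [shiftLab, okChild]

/-- Relabel all variable nodes, depending on their λ-depth. -/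
def Tm.mapVar (t : Tm) (σ : ℕ → ℕ → ℕ) : Tm where
  lab p := (t.lab p).map (shiftLab (σ (t.ldepth p)))
  root := by
    have h := t.root
    cases hl : t.lab [] with
    | none => rw [hl] at h; simp at h
    | some l => simp [hl]
  cons p b := by
    constructor
    · intro hs
      have hs' : (t.lab (p ++ [b])).isSome := by simpa using hs
      obtain ⟨l', hl', hok⟩ := (t.cons p b).1 hs'
      exact ⟨shiftLab (σ (t.ldepth p)) l', by simp [hl'],
        (okChild_shiftLab _ _ _).2 hok⟩
    · rintro ⟨l', hl', hok⟩
      obtain ⟨l, hl, hfl⟩ := Option.map_eq_some_iff.mp (by simpa using hl')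
      have hok' : okChild l b := by
        have := hfl ▸ hok
        exact (okChild_shiftLab (σ (t.ldepth p)) l b).1 this
      have hs : (t.lab (p ++ [b])).isSome := (t.cons p b).2 ⟨l, hl, hok'⟩
      simpa using hs

/-- The term consisting of a single variable node with index 0. -/
def var0Tm : Tm where
  lab p := if p = [] then some (.var 0) else none
  root := by simp
  cons p b := by
    constructor
    · intro h
      simp only [List.append_eq_nil_iff] at h
      simp at h
    · rintro ⟨l, hl, hok⟩
      by_cases hp : p = []
      · subst hp
        simp only [if_pos rfl, Option.some.injEq] at hl
        cases hl
        cases b <;> simp [okChild] at hok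
      · simp [hp] at hl

/-- The last-but-`j` abstraction-prefix variable occurs in `t`
(at λ-depth `d` inside the term it has de Bruijn index `j + d`). -/
def OccursJ (j : ℕ) (t : Tm) : Prop := ∃ p, t.lab p = some (.var (j + t.ldepth p))

/-- Remove the prefix variable with base index `j` from the de Bruijn indexing. -/
def downJ (j : ℕ) (t : Tm) : Tm := t.mapVar (fun d k => if j + d < k then k - 1 else k)

/-- The last abstraction-prefix variable occurs. -/
def occurs0 : Tm → Prop := OccursJ 0

/-- Remove the (vacuous) last abstraction-prefix variable. -/
def down0 : Tm → Tm := downJ 0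

/-- `t` has no free variables pointing outside the term itself. -/
def ClosedTm (t : Tm) : Prop := ∀ p k, t.lab p = some (.var k) → k < t.ldepth p

/-- Sequents: a prefix length together with an infinite λ-term. -/
abbrev TSeq : Type := ℕ × Tm

/-- λ-decomposition step of the ARS `Reg⁺`. -/
def SLam (s s' : TSeq) : Prop :=
  s.2.lab [] = some .lam ∧ s'.1 = s.1 + 1 ∧
    ∃ h : (s.2.lab [false]).isSome, s'.2 = s.2.sub [false] h

/-- Left application-decomposition step. -/
def SApp0 (s s' : TSeq) : Prop :=
  s.2.lab [] = some .app ∧ s'.1 = s.1 ∧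
    ∃ h : (s.2.lab [false]).isSome, s'.2 = s.2.sub [false] h

/-- Right application-decomposition step. -/
def SApp1 (s s' : TSeq) : Prop :=
  s.2.lab [] = some .app ∧ s'.1 = s.1 ∧
    ∃ h : (s.2.lab [true]).isSome, s'.2 = s.2.sub [true] h

/-- Vacuous-prefix removal step (removal of the last prefix variable). -/
def SDel (s s' : TSeq) : Prop :=
  s.1 = s'.1 + 1 ∧ ¬ occurs0 s.2 ∧ s'.2 = down0 s.2

/-- The scope⁺-decomposition ARS `Reg⁺` on prefixed infinite λ-terms. -/
def Step (s s' : TSeq) : Prop := SLam s s' ∨ SApp0 s s' ∨ SApp1 s s' ∨ SDel s s'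

/-- A (scope⁺-delimiting) strategy for the ARS `Reg⁺`: a sub-ARS with the
same objects and the same normal forms. -/
def Strategy (S : TSeq → TSeq → Prop) : Prop :=
  (∀ a b, S a b → Step a b) ∧ (∀ a, (∃ b, Step a b) → ∃ b, S a b)

/-- An infinite λ-term is strongly regular if some scope⁺-delimiting strategy
reaches only finitely many sequents from it. -/
def StronglyRegular (M : Tm) : Prop :=
  ∃ S : TSeq → TSeq → Prop, Strategy S ∧ {s | Relation.ReflTransGen S (0, M) s}.Finite

/-- λletrec-terms in de Bruijn style: a `letrec` with binding group `bs` binds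
`bs.length` recursion variables in all of `bs` and in the body; `cst` are the
fresh constants used by the rule `FIX_letrec`. -/
inductive LTm : Type
  | var : ℕ → LTm
  | lam : LTm → LTm
  | app : LTm → LTm → LTm
  | letrec : List LTm → LTm → LTm
  | cst : ℕ → LTm

namespace LTm

/-- Does the constant `c` occur? -/
def usesCst (c : ℕ) : LTm → Bool
  | .var _ => false
  | .lam t => usesCst c t
  | .app t u => usesCst c t || usesCst c u
  | .letrec bs b => (bs.attach.map fun x => usesCst c x.1).any id || usesCst c b
  | .cst i => i == c
decreasing_by
  all_goals simp_wf
  all_goals first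
    | (have := List.sizeOf_lt_of_mem x.2; omega)
    | omega

/-- Does the free variable with (relative) index `i` occur? -/
def occursIdx (i : ℕ) : LTm → Bool
  | .var k => k == i
  | .lam t => occursIdx (i + 1) t
  | .app t u => occursIdx i t || occursIdx i u
  | .letrec bs b =>
      (bs.attach.map fun x => occursIdx (i + bs.length) x.1).any id ||
        occursIdx (i + bs.length) b
  | .cst _ => false
decreasing_by
  all_goals simp_wf
  all_goals first
    | (have := List.sizeOf_lt_of_mem x.2; omega)
    | omega

/-- Remove the free variable with index `i` from the de Bruijn indexing
(decrement all indices above it). -/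
def downIdx (i : ℕ) : LTm → LTm
  | .var k => if i < k then .var (k - 1) else .var k
  | .lam t => .lam (downIdx (i + 1) t)
  | .app t u => .app (downIdx i t) (downIdx i u)
  | .letrec bs b =>
      .letrec (bs.attach.map fun x => downIdx (i + bs.length) x.1)
        (downIdx (i + bs.length) b)
  | .cst c => .cst c
decreasing_by
  all_goals simp_wf
  all_goals first
    | (have := List.sizeOf_lt_of_mem x.2; omega)
    | omega

/-- Substitute the constants `cs` for the `cs.length` outermost-bound
variables (the recursion variables of a letrec binding group), shifting the
remaining free variables down accordingly. -/
def substC (cs : List ℕ) (d : ℕ) : LTm → LTm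
  | .var k =>
      if k < d then .var k
      else if h : k - d < cs.length then .cst (cs.get ⟨k - d, h⟩)
      else .var (k - cs.length)
  | .lam t => .lam (substC cs (d + 1) t)
  | .app t u => .app (substC cs d t) (substC cs d u)
  | .letrec bs b =>
      .letrec (bs.attach.map fun x => substC cs (d + bs.length) x.1)
        (substC cs (d + bs.length) b)
  | .cst c => .cst c
decreasing_by
  all_goals simp_wf
  all_goals first
    | (have := List.sizeOf_lt_of_mem x.2; omega)
    | omega

/-- All free variables have index below `d`. -/
def closedAt (d : ℕ) : LTm → Bool
  | .var k => k < d
  | .lam t => closedAt (d + 1) t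
  | .app t u => closedAt d t && closedAt d u
  | .letrec bs b =>
      (bs.attach.map fun x => closedAt (d + bs.length) x.1).all id &&
        closedAt (d + bs.length) b
  | .cst _ => true
decreasing_by
  all_goals simp_wf
  all_goals first
    | (have := List.sizeOf_lt_of_mem x.2; omega)
    | omega

/-- No constants occur. -/
def noCst : LTm → Bool
  | .var _ => true
  | .lam t => noCst t
  | .app t u => noCst t && noCst u
  | .letrec bs b => (bs.attach.map fun x => noCst x.1).all id && noCst b
  | .cst _ => false
decreasing_by
  all_goals simp_wf
  all_goals first
    | (have := List.sizeOf_lt_of_mem x.2; omega)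
    | omega

end LTm

/-- Sequents of the λletrec proof systems: a prefix length and a λletrec-term. -/
abbrev LSeq : Type := ℕ × LTm

/-- Contexts of marked assumptions `(x⃗) c_f`, recorded as pairs of the prefix
length and the identifier of the fresh constant. -/
abbrev LCtx : Type := List (ℕ × ℕ)

/-- Natural-deduction derivations of the proof system `ug-Reg⁺_letrec` on
λletrec-terms (the guardedness side-condition of `Reg⁺_letrec` and the
prefix-length side-condition are recorded separately). -/
inductive LDeriv : LCtx → LSeq → Type
  | assum (Γ : LCtx) (i : Fin Γ.length) :
      LDeriv Γ ((Γ.get i).1, .cst (Γ.get i).2)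
  | ax (Γ : LCtx) (n : ℕ) (h : 1 ≤ n) : LDeriv Γ (n, .var 0)
  | lam (Γ : LCtx) (n : ℕ) (t : LTm) (D : LDeriv Γ (n + 1, t)) :
      LDeriv Γ (n, .lam t)
  | app (Γ : LCtx) (n : ℕ) (t u : LTm)
      (D0 : LDeriv Γ (n, t)) (D1 : LDeriv Γ (n, u)) : LDeriv Γ (n, .app t u)
  | del (Γ : LCtx) (n : ℕ) (t : LTm) (hocc : t.occursIdx 0 = false)
      (D : LDeriv Γ (n, t.downIdx 0)) : LDeriv Γ (n + 1, t)
  | fixl (Γ : LCtx) (n : ℕ) (bs : List LTm) (b : LTm) (cs : List ℕ)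
      (hlen : cs.length = bs.length) (hnd : cs.Nodup)
      (hfresh : ∀ c ∈ cs, (LTm.letrec bs b).usesCst c = false)
      (prems : ∀ i : Fin bs.length,
        LDeriv ((cs.map fun c => (n, c)) ++ Γ) (n, LTm.substC cs 0 (bs.get i)))
      (pbody : LDeriv ((cs.map fun c => (n, c)) ++ Γ) (n, LTm.substC cs 0 b)) :
      LDeriv Γ (n, .letrec bs b)

namespace LDeriv

/-- `D.usesA j` : some marked-assumption leaf of `D` refers to context entry `j`. -/
def usesA : ∀ {Γ s}, LDeriv Γ s → ℕ → Prop
  | _, _, .assum _ i, j => (i : ℕ) = j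
  | _, _, .ax _ _ _, _ => False
  | _, _, .lam _ _ _ D, j => D.usesA j
  | _, _, .app _ _ _ _ D0 D1, j => D0.usesA j ∨ D1.usesA j
  | _, _, .del _ _ _ _ D, j => D.usesA j
  | _, _, .fixl _ _ bs _ cs _ _ _ prems pbody, j =>
      (∃ i : Fin bs.length, (prems i).usesA (j + cs.length)) ∨ pbody.usesA (j + cs.length)

/-- `D.HoldsL m j` : every node of `D` whose subtree uses context entry `j`
has abstraction-prefix length at least `m`. -/
def HoldsL : ∀ {Γ s}, LDeriv Γ s → ℕ → ℕ → Prop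
  | _, _, .assum Γ i, m, j => ((i : ℕ) = j → m ≤ (Γ.get i).1)
  | _, _, .ax _ _ _, _, _ => True
  | _, _, .lam _ n _ D, m, j => (D.usesA j → m ≤ n) ∧ D.HoldsL m j
  | _, _, .app _ n _ _ D0 D1, m, j =>
      ((D0.usesA j ∨ D1.usesA j) → m ≤ n) ∧ D0.HoldsL m j ∧ D1.HoldsL m j
  | _, _, .del _ n _ _ D, m, j => (D.usesA j → m ≤ n + 1) ∧ D.HoldsL m j
  | _, _, .fixl _ n bs _ cs _ _ _ prems pbody, m, j =>
      (((∃ i : Fin bs.length, (prems i).usesA (j + cs.length)) ∨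
          pbody.usesA (j + cs.length)) → m ≤ n) ∧
      (∀ i : Fin bs.length, (prems i).HoldsL m (j + cs.length)) ∧
      pbody.HoldsL m (j + cs.length)

/-- The prefix-length side-condition on `FIX_letrec` instances: along threads
from the open marked assumptions introduced by the instance downwards, all
sequents have abstraction prefix at least as long as that of the assumption. -/
def PrefOK : ∀ {Γ s}, LDeriv Γ s → Prop
  | _, _, .assum _ _ => True
  | _, _, .ax _ _ _ => True
  | _, _, .lam _ _ _ D => D.PrefOK
  | _, _, .app _ _ _ _ D0 D1 => D0.PrefOK ∧ D1.PrefOK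
  | _, _, .del _ _ _ _ D => D.PrefOK
  | _, _, .fixl _ n bs _ cs _ _ _ prems pbody =>
      (∀ i : Fin bs.length,
        (prems i).PrefOK ∧ ∀ j < cs.length, (prems i).HoldsL n j) ∧
      pbody.PrefOK ∧ ∀ j < cs.length, pbody.HoldsL n j

end LDeriv

/-!
The derivation of `() L` is built bottom-up along `L`, keeping the invariant that every marked
assumption in scope has prefix length at most that of the current sequent. A variable with index
`k` is derived by `k` instances of `del` above an axiom, a constant `c_f` whose marked assumption
has prefix length `m ≤ n` by `n - m` instances of `del` directly above that assumption, and a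
`letrec` by `FIX_letrec` with constants fresh for the term. Hence every sequent on a thread from a
marked assumption down to the `FIX_letrec` instance discharging it has prefix length at least that
of the assumption, which is the side-condition. The recursion terminates because `substC`
preserves a size measure that ignores indices.
-/

namespace LTm

@[induction_eliminator]
theorem induction_mem {P : LTm → Prop} (var : ∀ k, P (.var k))
    (lam : ∀ t, P t → P (.lam t)) (app : ∀ t u, P t → P u → P (.app t u))
    (letrec : ∀ bs b, (∀ x ∈ bs, P x) → P b → P (.letrec bs b))
    (cst : ∀ c, P (.cst c)) : ∀ t, P t
  | .var k => var k
  | .lam t => lam t (induction_mem var lam app letrec cst t)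
  | .app t u =>
      app t u (induction_mem var lam app letrec cst t) (induction_mem var lam app letrec cst u)
  | .letrec bs b => letrec bs b (fun x _ => induction_mem var lam app letrec cst x)
      (induction_mem var lam app letrec cst b)
  | .cst c => cst c
decreasing_by
  all_goals simp_wf
  all_goals first
    | (have := List.sizeOf_lt_of_mem ‹_ ∈ bs›; omega)
    | omega

/-- Unlike `sizeOf`, this ignores variable indices and constant names, so `substC` preserves it. -/
def size : LTm → ℕ
  | .var _ => 1
  | .lam t => size t + 1
  | .app t u => size t + size u + 1
  | .letrec bs b => (bs.attach.map fun x => size x.1).sum + size b + 1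
  | .cst _ => 1
decreasing_by
  all_goals simp_wf
  all_goals first
    | (have := List.sizeOf_lt_of_mem x.2; omega)
    | omega

theorem size_lt_letrec {x b : LTm} {bs : List LTm} (hx : x ∈ bs ∨ x = b) :
    x.size < (letrec bs b).size := by
  simp only [size, List.map_attach_eq_pmap, List.pmap_eq_map]
  rcases hx with hx | rfl
  · have := List.le_sum_of_mem (List.mem_map_of_mem (f := size) hx)
    omega
  · omega

theorem closedAt_of_closedAt_letrec {x b : LTm} {bs : List LTm} {d : ℕ} (hx : x ∈ bs ∨ x = b)
    (h : (letrec bs b).closedAt d) : x.closedAt (d + bs.length) := by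
  simp only [closedAt, List.map_attach_eq_pmap, List.pmap_eq_map, List.all_map,
    List.all_eq_true, Bool.and_eq_true, Function.comp_apply] at h
  rcases hx with hx | rfl
  exacts [h.1 x hx, h.2]

theorem usesCst_letrec_of_mem {x b : LTm} {bs : List LTm} {c : ℕ} (hx : x ∈ bs ∨ x = b)
    (h : x.usesCst c) : (letrec bs b).usesCst c := by
  simp only [usesCst, List.map_attach_eq_pmap, List.pmap_eq_map, List.any_map,
    List.any_eq_true, Bool.or_eq_true, Function.comp_apply]
  rcases hx with hx | rfl
  exacts [.inl ⟨x, hx, h⟩, .inr h]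

theorem size_substC (cs : List ℕ) (d : ℕ) (t : LTm) : (t.substC cs d).size = t.size := by
  induction t generalizing d with
  | var k => simp only [substC]; split_ifs <;> simp [size]
  | letrec bs b ihs ihb =>
    simp only [substC, size, List.map_attach_eq_pmap, List.pmap_eq_map, List.map_map]
    rw [List.map_congr_left (f := size ∘ substC cs _) (g := size) fun x hx => ihs x hx _, ihb]
  | _ => simp [substC, size, *]

theorem closedAt_substC (cs : List ℕ) {d m : ℕ} (t : LTm) (hdm : d ≤ m)
    (h : t.closedAt (m + cs.length)) : (t.substC cs d).closedAt m := by
  induction t generalizing d m with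
  | var k =>
    simp only [closedAt, decide_eq_true_eq] at h
    simp only [substC]
    split_ifs <;> simp [closedAt] <;> omega
  | lam t ih =>
    simp only [substC, closedAt] at h ⊢
    exact ih (by omega) (by rwa [Nat.add_right_comm])
  | letrec bs b ihs ihb =>
    simp only [substC, closedAt, List.map_attach_eq_pmap, List.pmap_eq_map, List.all_map,
      List.all_eq_true, Bool.and_eq_true, Function.comp_apply, List.length_map] at h ⊢
    rw [Nat.add_right_comm] at h
    exact ⟨fun x hx => ihs x hx (by omega) (h.1 x hx), ihb (by omega) h.2⟩
  | _ => simp_all [substC, closedAt]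

theorem usesCst_substC {cs : List ℕ} {d c : ℕ} {t : LTm}
    (h : (t.substC cs d).usesCst c) : c ∈ cs ∨ t.usesCst c := by
  induction t generalizing d with
  | var k =>
    simp only [substC] at h
    split_ifs at h <;> simp only [usesCst, beq_iff_eq, reduceCtorEq] at h
    exact .inl (h ▸ List.getElem_mem _)
  | letrec bs b ihs ihb =>
    simp only [substC, usesCst, List.map_attach_eq_pmap, List.pmap_eq_map, List.any_map,
      List.any_eq_true, Bool.or_eq_true, Function.comp_apply] at h ⊢
    rcases h with ⟨x, hx, h⟩ | h
    · exact (ihs x hx h).imp_right fun h => .inl ⟨x, hx, h⟩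
    · exact (ihb h).imp_right .inr
  | lam t ih =>
    simp only [substC, usesCst] at h ⊢
    exact ih h
  | app t u iht ihu =>
    simp only [substC, usesCst, Bool.or_eq_true] at h ⊢
    rcases h with h | h
    · exact (iht h).imp_right .inl
    · exact (ihu h).imp_right .inr
  | cst => simp_all [substC, usesCst]

theorem finite_setOf_usesCst (t : LTm) : {c | t.usesCst c}.Finite := by
  induction t with
  | letrec bs b ihs ihb =>
    have hbs : {c | ∃ x ∈ bs, x.usesCst c}.Finite := by
      convert bs.finite_toSet.biUnion ihs using 1
      ext
      simp
    simpa [usesCst, Set.ofPred_or] using hbs.union ihb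
  | lam t ih => simpa [usesCst]
  | app t u iht ihu => simpa [usesCst, Set.ofPred_or] using iht.union ihu
  | _ => simp [usesCst]

theorem exists_fresh_csts (t : LTm) (k : ℕ) :
    ∃ cs : List ℕ, cs.length = k ∧ cs.Nodup ∧ ∀ c ∈ cs, t.usesCst c = false := by
  obtain ⟨N, hN⟩ := (finite_setOf_usesCst t).bddAbove
  refine ⟨List.range' (N + 1) k, List.length_range', List.nodup_range', fun c hc => ?_⟩
  have hc : N + 1 ≤ c := (List.mem_range'_1.1 hc).1
  exact Bool.eq_false_iff.2 fun h => absurd (hN h) (by omega)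

theorem usesCst_eq_false_of_noCst {t : LTm} (h : t.noCst) (c : ℕ) : t.usesCst c = false := by
  induction t <;> simp_all [usesCst, noCst]

end LTm

namespace LDeriv

/-- The side-condition of `FIX_letrec` for each open assumption, at that assumption's own prefix
length: once `FIX_letrec` at prefix length `n` discharges assumptions of prefix length `n`, this is
exactly its side-condition. -/
def OpenPrefOK {Γ : LCtx} {s : LSeq} (D : LDeriv Γ s) : Prop :=
  ∀ j : Fin Γ.length, D.HoldsL Γ[j].1 j

section OpenPrefOK

variable {Γ : LCtx} {n : ℕ}

theorem openPrefOK_assum (i : Fin Γ.length) : (assum Γ i).OpenPrefOK := by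
  intro j hij
  rw [Fin.ext hij]
  rfl

theorem openPrefOK_ax (h : 1 ≤ n) : (ax Γ n h).OpenPrefOK :=
  fun _ => trivial

theorem OpenPrefOK.lam {t : LTm} {D : LDeriv Γ (n + 1, t)} (hD : D.OpenPrefOK)
    (hΓ : ∀ p ∈ Γ, p.1 ≤ n) : (lam Γ n t D).OpenPrefOK :=
  fun j => ⟨fun _ => hΓ _ (List.getElem_mem _), hD j⟩

theorem OpenPrefOK.app {t u : LTm} {D0 : LDeriv Γ (n, t)} {D1 : LDeriv Γ (n, u)}
    (hD0 : D0.OpenPrefOK) (hD1 : D1.OpenPrefOK) (hΓ : ∀ p ∈ Γ, p.1 ≤ n) :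
    (app Γ n t u D0 D1).OpenPrefOK :=
  fun j => ⟨fun _ => hΓ _ (List.getElem_mem _), hD0 j, hD1 j⟩

theorem OpenPrefOK.del {t : LTm} {hocc : t.occursIdx 0 = false} {D : LDeriv Γ (n, t.downIdx 0)}
    (hD : D.OpenPrefOK) (hΓ : ∀ j : Fin Γ.length, D.usesA j → Γ[j].1 ≤ n + 1) :
    (del Γ n t hocc D).OpenPrefOK :=
  fun j => ⟨hΓ j, hD j⟩

section fixl

variable {bs : List LTm} {b : LTm} {cs : List ℕ} {hlen : cs.length = bs.length} {hnd : cs.Nodup}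
  {hfresh : ∀ c ∈ cs, (LTm.letrec bs b).usesCst c = false}
  {prems : ∀ i : Fin bs.length,
    LDeriv ((cs.map fun c => (n, c)) ++ Γ) (n, LTm.substC cs 0 (bs.get i))}
  {pbody : LDeriv ((cs.map fun c => (n, c)) ++ Γ) (n, LTm.substC cs 0 b)}

theorem OpenPrefOK.holdsL_of_lt {s : LSeq} {D : LDeriv ((cs.map fun c => (n, c)) ++ Γ) s}
    (hD : D.OpenPrefOK) {j : ℕ} (hj : j < cs.length) : D.HoldsL n j := by
  simpa [List.getElem_append_left, hj] using hD ⟨j, by simp; omega⟩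

theorem OpenPrefOK.fixl (hprems : ∀ i, (prems i).OpenPrefOK) (hbody : pbody.OpenPrefOK)
    (hΓ : ∀ p ∈ Γ, p.1 ≤ n) :
    (fixl Γ n bs b cs hlen hnd hfresh prems pbody).OpenPrefOK := by
  intro j
  have hj : ∀ {s} (D : LDeriv ((cs.map fun c => (n, c)) ++ Γ) s), D.OpenPrefOK →
      D.HoldsL Γ[j].1 (j + cs.length) := by
    intro s D hD
    simpa [List.getElem_append_right] using hD ⟨j + cs.length, by simp; omega⟩
  exact ⟨fun _ => hΓ _ (List.getElem_mem _), fun i => hj _ (hprems i), hj _ hbody⟩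

theorem prefOK_fixl (hprems : ∀ i, (prems i).PrefOK ∧ (prems i).OpenPrefOK)
    (hbody : pbody.PrefOK ∧ pbody.OpenPrefOK) :
    (fixl Γ n bs b cs hlen hnd hfresh prems pbody).PrefOK :=
  ⟨fun i => ⟨(hprems i).1, fun _ hj => (hprems i).2.holdsL_of_lt hj⟩,
    hbody.1, fun _ hj => hbody.2.holdsL_of_lt hj⟩

end fixl

end OpenPrefOK

theorem exists_var (Γ : LCtx) {k n : ℕ} (h : k < n) :
    ∃ D : LDeriv Γ (n, .var k), D.PrefOK ∧ D.OpenPrefOK ∧ ∀ j, ¬ D.usesA j := by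
  induction k generalizing n with
  | zero => exact ⟨ax Γ n h, trivial, openPrefOK_ax h, fun _ => id⟩
  | succ k ih =>
    obtain ⟨n, rfl⟩ : ∃ m, n = m + 1 := ⟨n - 1, by omega⟩
    obtain ⟨D, hP, hO, hU⟩ : ∃ D : LDeriv Γ (n, (LTm.var (k + 1)).downIdx 0),
        D.PrefOK ∧ D.OpenPrefOK ∧ ∀ j, ¬ D.usesA j := by
      rw [show (LTm.var (k + 1)).downIdx 0 = .var k by simp [LTm.downIdx]]
      exact ih (by omega)
    have hocc : (LTm.var (k + 1)).occursIdx 0 = false := by simp [LTm.occursIdx]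
    exact ⟨del Γ n _ hocc D, hP, hO.del fun j hj => absurd hj (hU j), hU⟩

theorem exists_cst (Γ : LCtx) (i : Fin Γ.length) {n : ℕ} (h : Γ[i].1 ≤ n) :
    ∃ D : LDeriv Γ (n, .cst Γ[i].2),
      D.PrefOK ∧ D.OpenPrefOK ∧ ∀ j, D.usesA j → j = i := by
  induction n, h using Nat.le_induction with
  | base => exact ⟨assum Γ i, trivial, openPrefOK_assum i, fun _ h => h.symm⟩
  | succ n hn ih =>
    obtain ⟨D, hP, hO, hU⟩ : ∃ D : LDeriv Γ (n, (LTm.cst Γ[i].2).downIdx 0),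
        D.PrefOK ∧ D.OpenPrefOK ∧ ∀ j, D.usesA j → j = i := by
      rwa [show (LTm.cst Γ[i].2).downIdx 0 = .cst Γ[i].2 by simp [LTm.downIdx]]
    have hocc : (LTm.cst Γ[i].2).occursIdx 0 = false := by simp [LTm.occursIdx]
    refine ⟨del Γ n _ hocc D, hP, hO.del fun j hj => ?_, hU⟩
    rw [Fin.ext (hU j hj)]
    omega

theorem exists_prefOK_openPrefOK (t : LTm) {n : ℕ} {Γ : LCtx} (hΓ : ∀ p ∈ Γ, p.1 ≤ n)
    (hcl : t.closedAt n) (hcst : ∀ c, t.usesCst c → ∃ p ∈ Γ, p.2 = c) :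
    ∃ D : LDeriv Γ (n, t), D.PrefOK ∧ D.OpenPrefOK := by
  match t with
  | .var k =>
    obtain ⟨D, hP, hO, -⟩ := exists_var Γ (by simpa [LTm.closedAt] using hcl)
    exact ⟨D, hP, hO⟩
  | .cst c =>
    obtain ⟨p, hp, rfl⟩ := hcst c (by simp [LTm.usesCst])
    obtain ⟨i, rfl⟩ := List.mem_iff_get.1 hp
    obtain ⟨D, hP, hO, -⟩ := exists_cst Γ i (hΓ _ hp)
    exact ⟨D, hP, hO⟩
  | .lam t =>
    obtain ⟨D, hP, hO⟩ := exists_prefOK_openPrefOK t (fun p hp => (hΓ p hp).trans n.le_succ)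
      (by simpa [LTm.closedAt] using hcl) (fun c hc => hcst c (by simpa [LTm.usesCst] using hc))
    exact ⟨lam Γ n t D, hP, hO.lam hΓ⟩
  | .app t u =>
    simp only [LTm.closedAt, Bool.and_eq_true] at hcl
    obtain ⟨D0, hP0, hO0⟩ := exists_prefOK_openPrefOK t hΓ hcl.1
      (fun c hc => hcst c (by simp [LTm.usesCst, hc]))
    obtain ⟨D1, hP1, hO1⟩ := exists_prefOK_openPrefOK u hΓ hcl.2
      (fun c hc => hcst c (by simp [LTm.usesCst, hc]))
    exact ⟨app Γ n t u D0 D1, ⟨hP0, hP1⟩, hO0.app hO1 hΓ⟩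
  | .letrec bs b =>
    obtain ⟨cs, hlen, hnd, hfresh⟩ := (LTm.letrec bs b).exists_fresh_csts bs.length
    have hΓ' : ∀ p ∈ (cs.map fun c => (n, c)) ++ Γ, p.1 ≤ n := by
      simpa only [List.forall_mem_append, List.forall_mem_map] using ⟨fun _ _ => le_rfl, hΓ⟩
    have hsub : ∀ x, x ∈ bs ∨ x = b → ∃ D : LDeriv ((cs.map fun c => (n, c)) ++ Γ)
        (n, LTm.substC cs 0 x), D.PrefOK ∧ D.OpenPrefOK := by
      intro x hx
      refine exists_prefOK_openPrefOK _ hΓ' (LTm.closedAt_substC cs x n.zero_le ?_) ?_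
      · exact hlen ▸ LTm.closedAt_of_closedAt_letrec hx hcl
      · intro c hc
        rcases LTm.usesCst_substC hc with hc | hc
        · exact ⟨(n, c), List.mem_append_left _ (List.mem_map_of_mem hc), rfl⟩
        · obtain ⟨p, hp, rfl⟩ := hcst c (LTm.usesCst_letrec_of_mem hx hc)
          exact ⟨p, List.mem_append_right _ hp, rfl⟩
    choose Dp hDp using fun i : Fin bs.length => hsub (bs.get i) (.inl (List.get_mem _ _))
    obtain ⟨Db, hDb⟩ := hsub b (.inr rfl)
    exact ⟨fixl Γ n bs b cs hlen hnd hfresh Dp Db,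
      prefOK_fixl hDp hDb, OpenPrefOK.fixl (fun i => (hDp i).2) hDb.2 hΓ⟩
termination_by t.size
decreasing_by
  all_goals first
    | (simp only [LTm.size]; omega)
    | (rw [LTm.size_substC]; exact LTm.size_lt_letrec hx)

end LDeriv

/-- For every (closed, constant-free) λletrec-term `L`, the
empty-prefix sequent `() L` is derivable in the unguarded proof system
`ug-Reg⁺_letrec`, i.e. there is a closed derivation, satisfying the
prefix-length side-condition of `FIX_letrec`, with conclusion `() L`
(constructed deterministically bottom-up following the term structure). -/
theorem stmt14 (L : LTm) (hc : L.closedAt 0 = true) (hn : L.noCst = true) :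
    ∃ D : LDeriv [] ((0 : ℕ), L), D.PrefOK := by
  obtain ⟨D, hP, -⟩ := LDeriv.exists_prefOK_openPrefOK L (Γ := []) (by simp) hc
    (fun c hc => by simp [LTm.usesCst_eq_false_of_noCst hn] at hc)
  exact ⟨D, hP⟩
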